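/- Every bipartite graph is an induced subgraph of some bipartite square-complementary graph. -/

import Mathlib

open SimpleGraph

/-- The square of a graph: two distinct vertices are adjacent iff they are at
distance at most 2 in `G`, i.e. adjacent or having a common neighbor. -/
def SimpleGraph.square {V : Type*} (G : SimpleGraph V) : SimpleGraph V where
  Adj u v := u ≠ v ∧ (G.Adj u v ∨ ∃ w, G.Adj u w ∧ G.Adj w v)
  symm := by
    constructor
    rintro u v ⟨h, h' | ⟨w, hw1, hw2⟩⟩
    · exact ⟨h.symm, Or.inl h'.symm⟩
    · exact ⟨h.symm, Or.inr ⟨w, hw2.symm, hw1.symm⟩⟩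
  loopless := ⟨by rintro v ⟨h, -⟩; exact h rfl⟩

/-- A graph is square-complementary (squco) if its square is isomorphic to its
complement. -/
def SimpleGraph.IsSquco {V : Type*} (G : SimpleGraph V) : Prop :=
  Nonempty (G.square ≃g Gᶜ)

/-- `{A, B}` is a bipartition of `G`: the two sets partition the vertex set and
every edge of `G` joins a vertex of `A` to a vertex of `B`. -/
def SimpleGraph.IsBipartitionOf {V : Type*} (G : SimpleGraph V) (A B : Set V) : Prop :=
  (∀ v, v ∈ A ↔ v ∉ B) ∧ ∀ ⦃u v⦄, G.Adj u v → (u ∈ A ∧ v ∈ B) ∨ (u ∈ B ∧ v ∈ A)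

/-!
First enlarge the bipartite graph so that any two vertices on one side have both a common
neighbour and a common non-neighbour on the other side: add a copy of the `3 × 3` rook's board to
each side, cells being related when they share a row or a column, and let every old vertex behave
towards the new ones like the corner cell. Then take four layers of the enlarged vertex set and
join a vertex of one side in layer `r` to a vertex of the other side in layer `s` according to a
fixed `4 × 4` table of the functions `b`, `¬ b`, `true`, `false` of the relation bit `b`. The
table is chosen so that any two rows share a column in which both entries can be made true by
one bit: then any two vertices on the same side of the layered graph have a common neighbour, so
its square is complete on each side and coincides with the graph across the sides. The table is
also negated by shifting both layers by one, so this shift maps the square onto the complement.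
-/

namespace SimpleGraph.IsBipartitionOf

variable {W : Type*} {H : SimpleGraph W} {A B : Set W}

theorem not_adj_of_mem_iff (hH : H.IsBipartitionOf A B) {u v : W} (huv : u ∈ A ↔ v ∈ A) :
    ¬ H.Adj u v := by
  intro h
  rcases hH.2 h with ⟨hu, hv⟩ | ⟨hu, hv⟩
  · exact (hH.1 v).1 (huv.1 hu) hv
  · exact (hH.1 u).1 (huv.2 hv) hu

theorem adj_iff (hH : H.IsBipartitionOf A B) {u v : W} :
    H.Adj u v ↔ (u ∈ A ∧ v ∉ A ∧ H.Adj u v) ∨ (v ∈ A ∧ u ∉ A ∧ H.Adj v u) := by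
  refine ⟨fun h => ?_, by rintro (⟨-, -, h⟩ | ⟨-, -, h⟩) <;> first | exact h | exact h.symm⟩
  by_cases hu : u ∈ A
  · exact Or.inl ⟨hu, fun hv => hH.not_adj_of_mem_iff (iff_of_true hu hv) h, h⟩
  · by_cases hv : v ∈ A
    · exact Or.inr ⟨hv, hu, h.symm⟩
    · exact absurd h (hH.not_adj_of_mem_iff (iff_of_false hu hv))

theorem square_adj_of_mem_iff_not (hH : H.IsBipartitionOf A B) {u v : W}
    (huv : u ∈ A ↔ v ∉ A) : H.square.Adj u v ↔ H.Adj u v := by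
  refine ⟨?_, fun h => ⟨h.ne, Or.inl h⟩⟩
  rintro ⟨-, h | ⟨w, huw, hwv⟩⟩
  · exact h
  · by_cases huw' : u ∈ A ↔ w ∈ A
    · exact absurd huw (hH.not_adj_of_mem_iff huw')
    · exact absurd hwv (hH.not_adj_of_mem_iff (by tauto))

theorem isSquco (hH : H.IsBipartitionOf A B) (σ : W ≃ W) (hσ : ∀ w, σ w ∈ A ↔ w ∈ A)
    (hflip : ∀ u v, u ∈ A → v ∉ A → (H.Adj (σ u) (σ v) ↔ ¬ H.Adj u v))
    (hcommon : ∀ u v, (u ∈ A ↔ v ∈ A) → ∃ w, H.Adj u w ∧ H.Adj w v) : H.IsSquco := by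
  refine ⟨⟨σ, fun {u v} => ?_⟩⟩
  rw [compl_adj, σ.injective.ne_iff]
  by_cases huv : u ∈ A ↔ v ∈ A
  · rw [and_iff_left (hH.not_adj_of_mem_iff (by rw [hσ, hσ]; exact huv))]
    exact ⟨fun hne => ⟨hne, Or.inr (hcommon u v huv)⟩, And.left⟩
  · have huv' : u ∈ A ↔ v ∉ A := by tauto
    rw [hH.square_adj_of_mem_iff_not huv', and_iff_right (by rintro rfl; exact huv Iff.rfl)]
    by_cases hu : u ∈ A
    · rw [hflip u v hu (huv'.1 hu), not_not]
    · rw [H.adj_comm, H.adj_comm u, hflip v u (by tauto) hu, not_not]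

end SimpleGraph.IsBipartitionOf

/-- Row `r` is row `0` shifted by `r` columns and negated `r` times. -/
def layerRel : Fin 4 → Fin 4 → Bool → Bool :=
  ![![id, fun _ => true, id, fun _ => false],
    ![fun _ => true, not, fun _ => false, not],
    ![id, fun _ => false, id, fun _ => true],
    ![fun _ => false, not, fun _ => true, not]]

theorem layerRel_add_one (r s : Fin 4) (b : Bool) :
    layerRel (r + 1) (s + 1) b = !layerRel r s b := by
  revert r s b; decide

theorem layerRel_comm (r s : Fin 4) : layerRel r s = layerRel s r := by
  revert r s; decide

theorem exists_layerRel_eq_true (r r' : Fin 4) :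
    ∃ t c, layerRel r t c = true ∧ layerRel r' t c = true := by
  revert r r'; decide

section LayerGraph

variable {U : Type*} (S : Set U) (K : U → U → Bool)

def layerGraph : SimpleGraph (U × Fin 4) where
  Adj a b := (a.1 ∈ S ∧ b.1 ∉ S ∧ layerRel a.2 b.2 (K a.1 b.1)) ∨
    (b.1 ∈ S ∧ a.1 ∉ S ∧ layerRel b.2 a.2 (K b.1 a.1))
  symm := ⟨fun _ _ => Or.symm⟩
  loopless := ⟨fun _ h => by rcases h with ⟨h₁, h₂, -⟩ | ⟨h₁, h₂, -⟩ <;> exact h₂ h₁⟩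

def HasCommonNbrsAndNonNbrs : Prop :=
  (∀ x ∈ S, ∀ x' ∈ S, ∀ c, ∃ y ∉ S, K x y = c ∧ K x' y = c) ∧
    ∀ y ∉ S, ∀ y' ∉ S, ∀ c, ∃ x ∈ S, K x y = c ∧ K x y' = c

theorem layerGraph_isBipartitionOf :
    (layerGraph S K).IsBipartitionOf {a | a.1 ∈ S} {a | a.1 ∉ S} := by
  refine ⟨fun _ => not_not.symm, ?_⟩
  rintro a b (⟨ha, hb, -⟩ | ⟨hb, ha, -⟩)
  exacts [Or.inl ⟨ha, hb⟩, Or.inr ⟨ha, hb⟩]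

variable {S K}

theorem layerGraph_adj_of_mem_of_notMem {x y : U} (hx : x ∈ S) (hy : y ∉ S) (r s : Fin 4) :
    (layerGraph S K).Adj (x, r) (y, s) ↔ layerRel r s (K x y) := by
  simp [layerGraph, hx, hy]

theorem layerGraph_adj_shift {x y : U} (hx : x ∈ S) (hy : y ∉ S) (r s : Fin 4) :
    (layerGraph S K).Adj (x, r + 1) (y, s + 1) ↔ ¬ (layerGraph S K).Adj (x, r) (y, s) := by
  simp only [layerGraph_adj_of_mem_of_notMem hx hy, layerRel_add_one, Bool.not_eq_true',
    Bool.not_eq_true]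

theorem layerGraph_exists_common_adj (hK : HasCommonNbrsAndNonNbrs S K) {x x' : U}
    (hxx' : x ∈ S ↔ x' ∈ S) (r r' : Fin 4) :
    ∃ w, (layerGraph S K).Adj (x, r) w ∧ (layerGraph S K).Adj w (x', r') := by
  obtain ⟨t, c, h, h'⟩ := exists_layerRel_eq_true r r'
  by_cases hx : x ∈ S
  · have hx' : x' ∈ S := hxx'.1 hx
    obtain ⟨y, hy, hxy, hx'y⟩ := hK.1 x hx x' hx' c
    refine ⟨(y, t), (layerGraph_adj_of_mem_of_notMem hx hy r t).2 (hxy ▸ h),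
      ((layerGraph_adj_of_mem_of_notMem hx' hy r' t).2 (hx'y ▸ h')).symm⟩
  · have hx' : x' ∉ S := fun h => hx (hxx'.2 h)
    obtain ⟨z, hz, hzx, hzx'⟩ := hK.2 x hx x' hx' c
    refine ⟨(z, t), ((layerGraph_adj_of_mem_of_notMem hz hx t r).2 ?_).symm,
      (layerGraph_adj_of_mem_of_notMem hz hx' t r').2 ?_⟩
    · rwa [layerRel_comm, hzx]
    · rwa [layerRel_comm, hzx']

theorem layerGraph_isSquco (hK : HasCommonNbrsAndNonNbrs S K) : (layerGraph S K).IsSquco := by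
  refine (layerGraph_isBipartitionOf S K).isSquco ((Equiv.refl U).prodCongr (Equiv.addRight 1))
    (fun _ => Iff.rfl) ?_ (fun a b h => layerGraph_exists_common_adj hK h a.2 b.2)
  rintro ⟨x, r⟩ ⟨y, s⟩ (hx : x ∈ S) (hy : y ∉ S)
  exact layerGraph_adj_shift hx hy r s

theorem layerGraph_adj_zero (x y : U) :
    (layerGraph S K).Adj (x, 0) (y, 0) ↔ (x ∈ S ∧ y ∉ S ∧ K x y) ∨ (y ∈ S ∧ x ∉ S ∧ K y x) :=
  Iff.rfl

end LayerGraph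

abbrev Cell := Fin 3 × Fin 3

def rookRel (p q : Cell) : Bool := p.1 = q.1 || p.2 = q.2

theorem rookRel_comm (p q : Cell) : rookRel p q = rookRel q p := by
  simp only [rookRel, eq_comm]

theorem exists_rookRel_eq (p q : Cell) (c : Bool) : ∃ r, rookRel p r = c ∧ rookRel q r = c := by
  revert p q c; decide

section Extension

variable {V : Type*}

def extSide (A : Set V) : Set (V ⊕ Cell ⊕ Cell)
  | .inl v => v ∈ A
  | .inr (.inl _) => True
  | .inr (.inr _) => False

def cellOf : V ⊕ Cell ⊕ Cell → Cell
  | .inl _ => 0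
  | .inr (.inl p) => p
  | .inr (.inr p) => p

open Classical in
noncomputable def extRel (G : SimpleGraph V) : V ⊕ Cell ⊕ Cell → V ⊕ Cell ⊕ Cell → Bool
  | .inl u, .inl v => decide (G.Adj u v)
  | x, y => rookRel (cellOf x) (cellOf y)

theorem extRel_inl_inl (G : SimpleGraph V) (u v : V) :
    extRel G (.inl u) (.inl v) = true ↔ G.Adj u v := by
  simp [extRel]

theorem extRel_hasCommonNbrsAndNonNbrs (G : SimpleGraph V) (A : Set V) :
    HasCommonNbrsAndNonNbrs (extSide A) (extRel G) := by
  constructor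
  · intro x _ x' _ c
    obtain ⟨q, hq, hq'⟩ := exists_rookRel_eq (cellOf x) (cellOf x') c
    exact ⟨.inr (.inr q), not_false, by cases x <;> exact hq, by cases x' <;> exact hq'⟩
  · intro y _ y' _ c
    obtain ⟨p, hp, hp'⟩ := exists_rookRel_eq (cellOf y) (cellOf y') c
    refine ⟨.inr (.inl p), trivial, ?_, ?_⟩
    · rw [← hp, rookRel_comm]; rfl
    · rw [← hp', rookRel_comm]; rfl

end Extension

/-- Every bipartite graph is an induced subgraph of a bipartite
square-complementary graph. -/
theorem bipartite_induced_subgraph_of_squco (V : Type) [Fintype V] (G : SimpleGraph V)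
    (A B : Set V) (hbip : G.IsBipartitionOf A B) :
    ∃ (W : Type) (_ : Fintype W) (H : SimpleGraph W) (A' B' : Set W) (f : V ↪ W),
      H.IsBipartitionOf A' B' ∧ H.IsSquco ∧
      ∀ u v : V, H.Adj (f u) (f v) ↔ G.Adj u v := by
  refine ⟨(V ⊕ Cell ⊕ Cell) × Fin 4, inferInstance, layerGraph (extSide A) (extRel G), _, _,
    ⟨fun v => (.inl v, 0), fun u v h => Sum.inl_injective (congrArg Prod.fst h)⟩,
    layerGraph_isBipartitionOf _ _, layerGraph_isSquco (extRel_hasCommonNbrsAndNonNbrs G A),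
    fun u v => ?_⟩
  rw [hbip.adj_iff]
  exact (layerGraph_adj_zero _ _).trans (by simp only [extRel_inl_inl]; rfl)
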